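/- In the super Jordan plane B, for all natural numbers b ≥ 1 and c ≥ 1 one has x21ᵇ·x2ᶜ = (x2 − b·x1)·x21ᵇ·x2ᶜ⁻¹, where the integer b is regarded as an element of k. -/
import Mathlib


/-- The defining relations of the super Jordan plane: `x1² = 0` and
`x2·x21 − x21·x2 − x1·x21 = 0`, where `x21 = x1·x2 + x2·x1`,
inside the free algebra on two generators. -/
inductive SuperJordanRel (k : Type*) [Field k] :
    FreeAlgebra k (Fin 2) → FreeAlgebra k (Fin 2) → Prop
  | quad : SuperJordanRel k (FreeAlgebra.ι k 0 * FreeAlgebra.ι k 0) 0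
  | cubic : SuperJordanRel k
      (FreeAlgebra.ι k 1 *
          (FreeAlgebra.ι k 0 * FreeAlgebra.ι k 1 + FreeAlgebra.ι k 1 * FreeAlgebra.ι k 0)
        - (FreeAlgebra.ι k 0 * FreeAlgebra.ι k 1 + FreeAlgebra.ι k 1 * FreeAlgebra.ι k 0) *
            FreeAlgebra.ι k 1
        - FreeAlgebra.ι k 0 *
            (FreeAlgebra.ι k 0 * FreeAlgebra.ι k 1 + FreeAlgebra.ι k 1 * FreeAlgebra.ι k 0)) 0

/-- The super Jordan plane. -/
abbrev SuperJordanPlane (k : Type*) [Field k] := RingQuot (SuperJordanRel k)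

/-- The generator `x1` of the super Jordan plane. -/
noncomputable def x1 (k : Type*) [Field k] : SuperJordanPlane k :=
  RingQuot.mkAlgHom k (SuperJordanRel k) (FreeAlgebra.ι k 0)

/-- The generator `x2` of the super Jordan plane. -/
noncomputable def x2 (k : Type*) [Field k] : SuperJordanPlane k :=
  RingQuot.mkAlgHom k (SuperJordanRel k) (FreeAlgebra.ι k 1)

/-- The element `x21 = x1·x2 + x2·x1` of the super Jordan plane. -/
noncomputable def x21 (k : Type*) [Field k] : SuperJordanPlane k :=
  x1 k * x2 k + x2 k * x1 k

lemma hx1 (k : Type*) [Field k] : x1 k * x1 k = 0 := by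
  have := RingQuot.mkAlgHom_rel k (SuperJordanRel.quad (k := k))
  simpa [x1] using this

lemma hrel (k : Type*) [Field k] :
    x21 k * x2 k = x2 k * x21 k - x1 k * x21 k := by
  have := RingQuot.mkAlgHom_rel k (SuperJordanRel.cubic (k := k))
  simp only [map_sub, map_mul, map_add] at this
  rw [x21, x1, x2]
  rw [map_zero] at this
  linear_combination (norm := noncomm_ring) -this

lemma hcomm (k : Type*) [Field k] : Commute (x1 k) (x21 k) := by
  have h : ∀ y : SuperJordanPlane k, x1 k * (x1 k * y) = 0 := by
    intro y; rw [← mul_assoc, hx1, zero_mul]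
  have h' : ∀ y : SuperJordanPlane k, y * x1 k * x1 k = 0 := by
    intro y; rw [mul_assoc, hx1, mul_zero]
  unfold Commute SemiconjBy
  simp only [x21, mul_add, add_mul, h, mul_assoc]
  rw [zero_add, hx1, mul_zero, add_zero]

lemma key (k : Type*) [Field k] (b : ℕ) :
    x21 k ^ b * x2 k = (x2 k - (b : k) • x1 k) * x21 k ^ b := by
  induction b with
  | zero => simp
  | succ n ih =>
    have hc : x21 k ^ n * (x1 k * x21 k) = x1 k * x21 k ^ (n + 1) := by
      rw [← mul_assoc, ← ((hcomm k).pow_right n).eq, mul_assoc, ← pow_succ]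
    calc x21 k ^ (n + 1) * x2 k = x21 k ^ n * (x21 k * x2 k) := by
          rw [pow_succ, mul_assoc]
      _ = x21 k ^ n * (x2 k * x21 k) - x1 k * x21 k ^ (n + 1) := by
          rw [hrel, mul_sub, hc]
      _ = (x2 k - (n : k) • x1 k) * x21 k ^ (n + 1) - x1 k * x21 k ^ (n + 1) := by
          rw [← mul_assoc, ih, pow_succ, mul_assoc]
      _ = (x2 k - ((n + 1 : ℕ) : k) • x1 k) * x21 k ^ (n + 1) := by
          push_cast
          rw [add_smul, one_smul, sub_mul, sub_mul, add_mul, sub_sub]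

theorem stmt3 (k : Type*) [Field k] [CharZero k] (b c : ℕ) (hb : 1 ≤ b) (hc : 1 ≤ c) :
    x21 k ^ b * x2 k ^ c = (x2 k - (b : k) • x1 k) * x21 k ^ b * x2 k ^ (c - 1) := by
  conv_lhs => rw [show c = (c - 1) + 1 from (Nat.succ_pred_eq_of_pos hc).symm,
    pow_succ', ← mul_assoc, key]
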